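/- Let d₁, d₂ be positive integers, A a d₁×d₁ real symmetric matrix, D a d₂×d₂ real symmetric matrix, and P a d₁×d₂ real matrix, and let J = [[A, P], [Pᵀ, D]]. Assume λmax(A) ≠ λmax(D) and set λ⁺ = max(λmax(A), λmax(D)) and δ⁺ = ‖P‖ · tan(½ · arctan(2‖P‖ / |λmax(A) − λmax(D)|)). Then all eigenvalues of J are real and λ⁺ ≤ λmax(J) ≤ λ⁺ + δ⁺. -/

import Mathlib

/-!
The lower bound comes from testing the Rayleigh quotient of `J` on a top eigenvector of `A` (or of
`D`) padded by zeros. For the upper bound, split a unit vector `x = (u, v)` and bound the three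
blocks of `xᵀ J x` by `a ‖u‖²`, `2 ‖P‖ ‖u‖ ‖v‖` and `d ‖v‖²`, where `a = λmax(A)`, `d = λmax(D)`;
what remains is the top eigenvalue `(a + d)/2 + √((a - d)²/4 + ‖P‖²)` of `[[a, ‖P‖], [‖P‖, d]]`, and
`‖P‖ · tan(½ arctan(2‖P‖/|a - d|)) = √((a - d)²/4 + ‖P‖²) - |a - d|/2` by the half-angle formula.
-/

open Matrix

/-- Largest eigenvalue of a Hermitian (real symmetric) matrix. -/
noncomputable def lamMax {n : Type*} [Fintype n] [DecidableEq n] {A : Matrix n n ℝ}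
    (hA : A.IsHermitian) : ℝ := ⨆ i, hA.eigenvalues i

/-- The ℓ²→ℓ² operator norm of a rectangular real matrix. -/
noncomputable def l2OpNorm {m n : ℕ} (Z : Matrix (Fin m) (Fin n) ℝ) : ℝ :=
  ‖LinearMap.toContinuousLinearMap (Matrix.toEuclideanLin Z)‖

theorem Real.tan_arctan_div_two (t : ℝ) :
    Real.tan (Real.arctan t / 2) = t / (√(1 + t ^ 2) + 1) := by
  set w := √(1 + t ^ 2)
  have hw2 : w ^ 2 = 1 + t ^ 2 := Real.sq_sqrt (by positivity)
  have hwt : |t| < w := by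
    rw [← Real.sqrt_sq_eq_abs]; exact Real.sqrt_lt_sqrt (sq_nonneg t) (by linarith)
  have hw1 : 0 < w + 1 := by linarith [abs_nonneg t]
  have hτ : |t / (w + 1)| < 1 := by
    rw [abs_div, abs_of_pos hw1, div_lt_one hw1]; linarith
  have hdouble : 2 * (t / (w + 1)) / (1 - (t / (w + 1)) ^ 2) = t := by
    have : 1 - (t / (w + 1)) ^ 2 = 2 / (w + 1) := by
      field_simp; linear_combination hw2
    rw [this]; field_simp
  have h := Real.two_mul_arctan (abs_lt.mp hτ).1 (abs_lt.mp hτ).2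
  rw [hdouble] at h
  rw [← h, mul_div_cancel_left₀ _ two_ne_zero, Real.tan_arctan]

theorem mul_tan_arctan_div_two {p q : ℝ} (hq : 0 < q) :
    p * Real.tan (Real.arctan (2 * p / q) / 2) = √(q ^ 2 / 4 + p ^ 2) - q / 2 := by
  set R := √(q ^ 2 / 4 + p ^ 2)
  have hR2 : R ^ 2 = q ^ 2 / 4 + p ^ 2 := Real.sq_sqrt (by positivity)
  have hR0 : 0 ≤ R := Real.sqrt_nonneg _
  have hw : √(1 + (2 * p / q) ^ 2) = 2 * R / q := by
    rw [Real.sqrt_eq_iff_mul_self_eq_of_pos (by positivity)]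
    field_simp
    linear_combination 4 * hR2
  rw [Real.tan_arctan_div_two, hw]
  field_simp
  linear_combination -4 * hR2

theorem binary_quadratic_form_le (a d p s t : ℝ) :
    a * s ^ 2 + 2 * p * (s * t) + d * t ^ 2 ≤
      ((a + d) / 2 + √((a - d) ^ 2 / 4 + p ^ 2)) * (s ^ 2 + t ^ 2) := by
  set R := √((a - d) ^ 2 / 4 + p ^ 2)
  have hR2 : R ^ 2 = (a - d) ^ 2 / 4 + p ^ 2 := Real.sq_sqrt (by positivity)
  -- Cauchy–Schwarz for `((a - d)/2, p)` and `(s² - t², 2st)`, the latter of length `s² + t²`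
  have hcs : ((a - d) / 2 * (s ^ 2 - t ^ 2) + p * (2 * s * t)) ^ 2 ≤ (R * (s ^ 2 + t ^ 2)) ^ 2 :=
    calc _ ≤ ((a - d) / 2 * (s ^ 2 - t ^ 2) + p * (2 * s * t)) ^ 2
          + ((a - d) / 2 * (2 * s * t) - p * (s ^ 2 - t ^ 2)) ^ 2 :=
          le_add_of_nonneg_right (sq_nonneg _)
      _ = (R * (s ^ 2 + t ^ 2)) ^ 2 := by rw [mul_pow, hR2]; ring
  have := abs_le_of_sq_le_sq' hcs (by positivity)
  linarith [this.2]

theorem norm_toLp_eq_sqrt_dotProduct {ι : Type*} [Fintype ι] (u : ι → ℝ) :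
    ‖WithLp.toLp 2 u‖ = √(u ⬝ᵥ u) := by
  simp [EuclideanSpace.norm_eq, dotProduct, sq]

theorem dotProduct_mulVec_le_l2OpNorm {m n : ℕ} (P : Matrix (Fin m) (Fin n) ℝ)
    (u : Fin m → ℝ) (v : Fin n → ℝ) :
    u ⬝ᵥ (P *ᵥ v) ≤ l2OpNorm P * (√(u ⬝ᵥ u) * √(v ⬝ᵥ v)) := by
  have hinner : u ⬝ᵥ (P *ᵥ v) = inner ℝ (WithLp.toLp 2 u) (toEuclideanLin P (WithLp.toLp 2 v)) := by
    rw [toLpLin_toLp, EuclideanSpace.inner_toLp_toLp, star_trivial, dotProduct_comm]; rfl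
  calc u ⬝ᵥ (P *ᵥ v) ≤ ‖WithLp.toLp 2 u‖ * ‖toEuclideanLin P (WithLp.toLp 2 v)‖ :=
        hinner ▸ real_inner_le_norm _ _
    _ ≤ ‖WithLp.toLp 2 u‖ * (l2OpNorm P * ‖WithLp.toLp 2 v‖) :=
        mul_le_mul_of_nonneg_left ((toEuclideanLin P).toContinuousLinearMap.le_opNorm _)
          (norm_nonneg _)
    _ = l2OpNorm P * (√(u ⬝ᵥ u) * √(v ⬝ᵥ v)) := by
        rw [norm_toLp_eq_sqrt_dotProduct, norm_toLp_eq_sqrt_dotProduct]; ring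

theorem sumElim_dotProduct_fromBlocks_transpose_mulVec_sumElim {R m n : Type*} [CommRing R]
    [Fintype m] [Fintype n] (A : Matrix m m R) (B : Matrix m n R) (D : Matrix n n R)
    (u : m → R) (v : n → R) :
    Sum.elim u v ⬝ᵥ (fromBlocks A B Bᵀ D *ᵥ Sum.elim u v) =
      u ⬝ᵥ (A *ᵥ u) + 2 * (u ⬝ᵥ (B *ᵥ v)) + v ⬝ᵥ (D *ᵥ v) := by
  rw [fromBlocks_mulVec, sumElim_dotProduct_sumElim]
  simp only [Sum.elim_comp_inl, Sum.elim_comp_inr, dotProduct_add]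
  rw [mulVec_transpose, dotProduct_comm v, ← dotProduct_mulVec]
  ring

section lamMax

variable {n : Type*} [Fintype n] [DecidableEq n] {A : Matrix n n ℝ}

theorem eigenvalues_le_lamMax (hA : A.IsHermitian) (i : n) : hA.eigenvalues i ≤ lamMax hA :=
  le_ciSup (Set.finite_range _).bddAbove i

theorem exists_eigenvalues_eq_lamMax [Nonempty n] (hA : A.IsHermitian) :
    ∃ i, hA.eigenvalues i = lamMax hA := by
  obtain ⟨i, hi⟩ := Finite.exists_max hA.eigenvalues
  exact ⟨i, le_antisymm (eigenvalues_le_lamMax hA i) (ciSup_le hi)⟩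

theorem exists_dotProduct_self_eq_one_and_dotProduct_mulVec_eq_lamMax [Nonempty n]
    (hA : A.IsHermitian) : ∃ x : n → ℝ, x ⬝ᵥ x = 1 ∧ x ⬝ᵥ (A *ᵥ x) = lamMax hA := by
  obtain ⟨i, hi⟩ := exists_eigenvalues_eq_lamMax hA
  refine ⟨hA.eigenvectorBasis i, ?_, ?_⟩
  · have h := real_inner_self_eq_norm_sq (hA.eigenvectorBasis i)
    rwa [hA.eigenvectorBasis.orthonormal.1 i, EuclideanSpace.inner_eq_star_dotProduct,
      star_trivial, one_pow] at h
  · simpa [hi] using (hA.eigenvalues_eq i).symm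

theorem posSemidef_smul_one_sub_of_eigenvalues_le (hA : A.IsHermitian) {c : ℝ}
    (hc : ∀ i, hA.eigenvalues i ≤ c) : (c • (1 : Matrix n n ℝ) - A).PosSemidef := by
  set U := hA.eigenvectorUnitary
  have hdiag : c • (1 : Matrix n n ℝ) - diagonal (RCLike.ofReal ∘ hA.eigenvalues) =
      diagonal fun i => c - hA.eigenvalues i := by
    rw [smul_one_eq_diagonal, diagonal_sub]; rfl
  have key : c • (1 : Matrix n n ℝ) - A =
      U * diagonal (fun i => c - hA.eigenvalues i) * star (U : Matrix n n ℝ) := by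
    conv_lhs => rw [hA.spectral_theorem]
    rw [← map_one (Unitary.conjStarAlgAut ℝ _ U), ← map_smul, ← map_sub, hdiag,
      Unitary.conjStarAlgAut_apply]
  rw [key]
  exact (posSemidef_diagonal_iff.mpr fun i => sub_nonneg.mpr (hc i)).mul_mul_conjTranspose_same _

theorem dotProduct_mulVec_le_lamMax_mul (hA : A.IsHermitian) (x : n → ℝ) :
    x ⬝ᵥ (A *ᵥ x) ≤ lamMax hA * (x ⬝ᵥ x) := by
  have h := (posSemidef_smul_one_sub_of_eigenvalues_le hA (eigenvalues_le_lamMax hA))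
    |>.dotProduct_mulVec_nonneg x
  simp only [star_trivial, sub_mulVec, smul_mulVec, one_mulVec, dotProduct_sub,
    dotProduct_smul, smul_eq_mul] at h
  linarith

theorem lamMax_le_of_forall_dotProduct_mulVec_le [Nonempty n] (hA : A.IsHermitian) {c : ℝ}
    (h : ∀ x, x ⬝ᵥ (A *ᵥ x) ≤ c * (x ⬝ᵥ x)) : lamMax hA ≤ c := by
  obtain ⟨x, hx, hAx⟩ := exists_dotProduct_self_eq_one_and_dotProduct_mulVec_eq_lamMax hA
  simpa [hx, hAx] using h x

theorem im_eq_zero_of_mem_spectrum_map_complex (hA : A.IsHermitian) {μ : ℂ}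
    (hμ : μ ∈ spectrum ℂ (A.map (algebraMap ℝ ℂ))) : μ.im = 0 := by
  have hAC : (A.map (algebraMap ℝ ℂ)).IsHermitian :=
    hA.map _ fun x => by simp [Complex.conj_ofReal]
  obtain ⟨_, ⟨i, rfl⟩, rfl⟩ := hAC.spectrum_eq_image_range ▸ hμ
  simp

end lamMax

section fromBlocks

variable {m n : Type*} [Fintype m] [Fintype n] [DecidableEq m] [DecidableEq n]
  {A : Matrix m m ℝ} {B : Matrix m n ℝ} {C : Matrix n m ℝ} {D : Matrix n n ℝ}

theorem lamMax_le_lamMax_fromBlocks_left [Nonempty m] (hA : A.IsHermitian)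
    (hJ : (fromBlocks A B C D).IsHermitian) : lamMax hA ≤ lamMax hJ := by
  obtain ⟨u, hu, hAu⟩ := exists_dotProduct_self_eq_one_and_dotProduct_mulVec_eq_lamMax hA
  simpa [fromBlocks_mulVec, sumElim_dotProduct_sumElim, hu, hAu] using
    dotProduct_mulVec_le_lamMax_mul hJ (Sum.elim u 0)

theorem lamMax_le_lamMax_fromBlocks_right [Nonempty n] (hD : D.IsHermitian)
    (hJ : (fromBlocks A B C D).IsHermitian) : lamMax hD ≤ lamMax hJ := by
  obtain ⟨v, hv, hDv⟩ := exists_dotProduct_self_eq_one_and_dotProduct_mulVec_eq_lamMax hD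
  simpa [fromBlocks_mulVec, sumElim_dotProduct_sumElim, hv, hDv] using
    dotProduct_mulVec_le_lamMax_mul hJ (Sum.elim 0 v)

end fromBlocks

theorem lamMax_fromBlocks_le {d₁ d₂ : ℕ} [Nonempty (Fin d₁ ⊕ Fin d₂)]
    {A : Matrix (Fin d₁) (Fin d₁) ℝ} {D : Matrix (Fin d₂) (Fin d₂) ℝ}
    {P : Matrix (Fin d₁) (Fin d₂) ℝ} (hA : A.IsHermitian) (hD : D.IsHermitian)
    (hJ : (fromBlocks A P Pᵀ D).IsHermitian) :
    lamMax hJ ≤ (lamMax hA + lamMax hD) / 2 +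
      √((lamMax hA - lamMax hD) ^ 2 / 4 + l2OpNorm P ^ 2) := by
  refine lamMax_le_of_forall_dotProduct_mulVec_le hJ fun x => ?_
  rw [← Sum.elim_comp_inl_inr x, sumElim_dotProduct_fromBlocks_transpose_mulVec_sumElim,
    sumElim_dotProduct_sumElim]
  set u := x ∘ Sum.inl
  set v := x ∘ Sum.inr
  have hu : √(u ⬝ᵥ u) ^ 2 = u ⬝ᵥ u := Real.sq_sqrt (by simpa using dotProduct_star_self_nonneg u)
  have hv : √(v ⬝ᵥ v) ^ 2 = v ⬝ᵥ v := Real.sq_sqrt (by simpa using dotProduct_star_self_nonneg v)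
  have := binary_quadratic_form_le (lamMax hA) (lamMax hD) (l2OpNorm P) √(u ⬝ᵥ u) √(v ⬝ᵥ v)
  rw [hu, hv] at this
  linarith [dotProduct_mulVec_le_lamMax_mul hA u, dotProduct_mulVec_le_lamMax_mul hD v,
    dotProduct_mulVec_le_l2OpNorm P u v]

theorem stmt6 {d₁ d₂ : ℕ} (hd₁ : 0 < d₁) (hd₂ : 0 < d₂)
    (A : Matrix (Fin d₁) (Fin d₁) ℝ) (D : Matrix (Fin d₂) (Fin d₂) ℝ)
    (P : Matrix (Fin d₁) (Fin d₂) ℝ)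
    (hA : A.IsHermitian) (hD : D.IsHermitian)
    (hJ : (Matrix.fromBlocks A P Pᵀ D).IsHermitian)
    (hne : lamMax hA ≠ lamMax hD) :
    (∀ μ ∈ spectrum ℂ ((Matrix.fromBlocks A P Pᵀ D).map (algebraMap ℝ ℂ)), μ.im = 0) ∧
    max (lamMax hA) (lamMax hD) ≤ lamMax hJ ∧
    lamMax hJ ≤ max (lamMax hA) (lamMax hD) +
        l2OpNorm P * Real.tan
          ((1 / 2) * Real.arctan (2 * l2OpNorm P / |lamMax hA - lamMax hD|)) := by
  have : Nonempty (Fin d₁) := Fin.pos_iff_nonempty.mp hd₁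
  have : Nonempty (Fin d₂) := Fin.pos_iff_nonempty.mp hd₂
  refine ⟨fun μ => im_eq_zero_of_mem_spectrum_map_complex hJ,
    max_le (lamMax_le_lamMax_fromBlocks_left hA hJ) (lamMax_le_lamMax_fromBlocks_right hD hJ), ?_⟩
  rw [one_div_mul_eq_div, mul_tan_arctan_div_two (abs_pos.mpr (sub_ne_zero.mpr hne)), sq_abs]
  linarith [lamMax_fromBlocks_le hA hD hJ, max_sub_min_eq_abs' (lamMax hA) (lamMax hD),
    min_add_max (lamMax hA) (lamMax hD)]
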